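/- arXiv:1806.10449 — 5 statements merged into one kernel-verified Lean document; each statement's English description precedes it below -/
import Mathlib

section
/- (Front-door adjustment, Step 2b: P(y|x, do(z)) = P(y|x, z).) Fix z : 𝒵 and x : 𝒳 with P(x, z) > 0, where P(x, z) = Σ_{u, y} P(u, x, z, y). Then for every y : 𝒴, the interventional conditional probability of Y = y given X = x under do(Z = z) equals the observational conditional probability: P(x, y | do(z)) / (Σ_{y'} P(x, y' | do(z))) = P(x, z, y) / P(x, z), where P(x, z, y) = Σ_u P(u, x, z, y). -/
/- Causal Bayesian network of Figure 1: latent `U`, structure `X ← U → Y`, `X → Z → Y`.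
The observational joint is `P(u,x,z,y) = pU u * pX u x * pZ x z * pY u z y`. -/

/-- Step 2b of the front-door adjustment: `P(y | x, do(z)) = P(y | x, z)`. -/
theorem frontdoor_step2b {𝒰 𝒳 𝒵 𝒴 : Type*} [Fintype 𝒰] [Fintype 𝒳] [Fintype 𝒵] [Fintype 𝒴]
    [Nonempty 𝒰] [Nonempty 𝒳] [Nonempty 𝒵] [Nonempty 𝒴]
    (pU : 𝒰 → ℝ) (pX : 𝒰 → 𝒳 → ℝ) (pZ : 𝒳 → 𝒵 → ℝ) (pY : 𝒰 → 𝒵 → 𝒴 → ℝ)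
    (hU0 : ∀ u, 0 ≤ pU u) (hX0 : ∀ u x, 0 ≤ pX u x)
    (hZ0 : ∀ x z, 0 ≤ pZ x z) (hY0 : ∀ u z y, 0 ≤ pY u z y)
    (hU1 : ∑ u, pU u = 1) (hX1 : ∀ u, ∑ x, pX u x = 1)
    (hZ1 : ∀ x, ∑ z, pZ x z = 1) (hY1 : ∀ u z, ∑ y, pY u z y = 1)
    (z : 𝒵) (x : 𝒳) (hxz : 0 < ∑ u, ∑ y, pU u * pX u x * pZ x z * pY u z y) (y : 𝒴) :
    (∑ u, pU u * pX u x * pY u z y) / (∑ y', ∑ u, pU u * pX u x * pY u z y') =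
      (∑ u, pU u * pX u x * pZ x z * pY u z y) /
        (∑ u, ∑ y', pU u * pX u x * pZ x z * pY u z y') := by
  have hc : 0 < pZ x z := by
    by_contra h
    push_neg at h
    have hz0 : pZ x z = 0 := le_antisymm h (hZ0 x z)
    simp [hz0] at hxz
  have hfac : ∀ w : 𝒴, ∑ u, pU u * pX u x * pZ x z * pY u z w
      = pZ x z * ∑ u, pU u * pX u x * pY u z w := by
    intro w
    rw [Finset.mul_sum]
    exact Finset.sum_congr rfl fun u _ => by ring
  have hswap : (∑ u, ∑ y', pU u * pX u x * pZ x z * pY u z y')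
      = pZ x z * ∑ y', ∑ u, pU u * pX u x * pY u z y' := by
    rw [Finset.sum_comm, Finset.mul_sum]
    exact Finset.sum_congr rfl fun w _ => hfac w
  rw [hfac y, hswap, mul_div_mul_left _ _ (ne_of_gt hc)]
end

section
/- (Front-door adjustment, Step 2: back-door formula for P(y|do(z)).) Fix z : 𝒵 and assume P(x, z) > 0 for every x : 𝒳, where P(x, z) = Σ_{u, y} P(u, x, z, y). Then for every y : 𝒴, the interventional probability of Y = y under do(Z = z) is given by adjusting for X: Σ_x P(x, y | do(z)) = Σ_x (P(x, z, y) / P(x, z)) · P(x), where P(x, z, y) = Σ_u P(u, x, z, y) and P(x) = Σ_{u, z', y} P(u, x, z', y). -/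
/-! Since `Z` has the single parent `X`, the factor `pZ x z` can be pulled out of both `P(x, z, y)` and
`P(x, z)`; it cancels in the conditional `P(y | x, z)`, and what remains is `Σ_u P(u, x) pY u z y / P(x)`.
Multiplying back by `P(x)` recovers the `x`-summand of the truncated factorization. -/

open Finset

lemma sum_mul_eq_self_of_sum_eq_one {ι : Type*} [Fintype ι] {k : ι → ℝ} (hk : ∑ i, k i = 1)
    (a : ℝ) : ∑ i, a * k i = a := by
  rw [← mul_sum, hk, mul_one]

section Marginals

variable {𝒰 𝒳 𝒵 𝒴 : Type*} [Fintype 𝒰]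
  (pU : 𝒰 → ℝ) (pX : 𝒰 → 𝒳 → ℝ) (pZ : 𝒳 → 𝒵 → ℝ) (pY : 𝒰 → 𝒵 → 𝒴 → ℝ)

lemma marginal_xzy_eq (x : 𝒳) (z : 𝒵) (y : 𝒴) :
    ∑ u, pU u * pX u x * pZ x z * pY u z y = pZ x z * ∑ u, pU u * pX u x * pY u z y := by
  rw [mul_sum]
  exact sum_congr rfl fun u _ => by ring

lemma marginal_xz_eq [Fintype 𝒴] (hY1 : ∀ u z, ∑ y, pY u z y = 1) (x : 𝒳) (z : 𝒵) :
    ∑ u, ∑ y, pU u * pX u x * pZ x z * pY u z y = pZ x z * ∑ u, pU u * pX u x := by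
  simp only [sum_mul_eq_self_of_sum_eq_one (hY1 _ z), mul_sum]
  exact sum_congr rfl fun u _ => by ring

lemma marginal_x_eq [Fintype 𝒵] [Fintype 𝒴] (hZ1 : ∀ x, ∑ z, pZ x z = 1) (hY1 : ∀ u z, ∑ y, pY u z y = 1) (x : 𝒳) :
    ∑ u, ∑ z, ∑ y, pU u * pX u x * pZ x z * pY u z y = ∑ u, pU u * pX u x := by
  simp only [sum_mul_eq_self_of_sum_eq_one (hY1 _ _), sum_mul_eq_self_of_sum_eq_one (hZ1 x)]

end Marginals

theorem frontdoor_step2_general {𝒰 𝒳 𝒵 𝒴 : Type*} [Fintype 𝒰] [Fintype 𝒳] [Fintype 𝒵] [Fintype 𝒴]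
    (pU : 𝒰 → ℝ) (pX : 𝒰 → 𝒳 → ℝ) (pZ : 𝒳 → 𝒵 → ℝ) (pY : 𝒰 → 𝒵 → 𝒴 → ℝ)
    (hZ1 : ∀ x, ∑ z, pZ x z = 1) (hY1 : ∀ u z, ∑ y, pY u z y = 1)
    (z : 𝒵) (hpos : ∀ x : 𝒳, 0 < ∑ u, ∑ y, pU u * pX u x * pZ x z * pY u z y) (y : 𝒴) :
    ∑ x, (∑ u, pU u * pX u x * pY u z y) =
      ∑ x, ((∑ u, pU u * pX u x * pZ x z * pY u z y) /
              (∑ u, ∑ y', pU u * pX u x * pZ x z * pY u z y')) *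
            (∑ u, ∑ z', ∑ y', pU u * pX u x * pZ x z' * pY u z' y') := by
  refine sum_congr rfl fun x _ => ?_
  have hxz : pZ x z * ∑ u, pU u * pX u x ≠ 0 :=
    (marginal_xz_eq pU pX pZ pY hY1 x z ▸ hpos x).ne'
  rw [marginal_xzy_eq, marginal_xz_eq pU pX pZ pY hY1, marginal_x_eq pU pX pZ pY hZ1 hY1,
    mul_div_mul_left _ _ (left_ne_zero_of_mul hxz), div_mul_cancel₀ _ (right_ne_zero_of_mul hxz)]

/-- Step 2 of the front-door adjustment: back-door adjustment formula for `P(y | do(z))`. -/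
theorem frontdoor_step2 {𝒰 𝒳 𝒵 𝒴 : Type*} [Fintype 𝒰] [Fintype 𝒳] [Fintype 𝒵] [Fintype 𝒴]
    [Nonempty 𝒰] [Nonempty 𝒳] [Nonempty 𝒵] [Nonempty 𝒴]
    (pU : 𝒰 → ℝ) (pX : 𝒰 → 𝒳 → ℝ) (pZ : 𝒳 → 𝒵 → ℝ) (pY : 𝒰 → 𝒵 → 𝒴 → ℝ)
    (hU0 : ∀ u, 0 ≤ pU u) (hX0 : ∀ u x, 0 ≤ pX u x)
    (hZ0 : ∀ x z, 0 ≤ pZ x z) (hY0 : ∀ u z y, 0 ≤ pY u z y)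
    (hU1 : ∑ u, pU u = 1) (hX1 : ∀ u, ∑ x, pX u x = 1)
    (hZ1 : ∀ x, ∑ z, pZ x z = 1) (hY1 : ∀ u z, ∑ y, pY u z y = 1)
    (z : 𝒵) (hpos : ∀ x : 𝒳, 0 < ∑ u, ∑ y, pU u * pX u x * pZ x z * pY u z y) (y : 𝒴) :
    ∑ x, (∑ u, pU u * pX u x * pY u z y) =
      ∑ x, ((∑ u, pU u * pX u x * pZ x z * pY u z y) /
              (∑ u, ∑ y', pU u * pX u x * pZ x z * pY u z y')) *
            (∑ u, ∑ z', ∑ y', pU u * pX u x * pZ x z' * pY u z' y') :=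
  frontdoor_step2_general pU pX pZ pY hZ1 hY1 z hpos y
end

section
/- (Front-door adjustment, Step 3a: P(y|z, do(x)) = P(y|do(x), do(z)).) Fix x : 𝒳 and z : 𝒵, and assume Σ_{u, y} pU u · pZ x z · pY u z y > 0 (i.e. P(z | do(x)) > 0). Then for every y : 𝒴, the conditional probability of Y = y given Z = z in the interventional distribution under do(X = x) equals the doubly interventional probability: P(z, y | do(x)) / (Σ_{y'} P(z, y' | do(x))) = P(y | do(x), do(z)). -/
/- Causal Bayesian network of Figure 1: latent `U`, structure `X ← U → Y`, `X → Z → Y`.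
The observational joint is `P(u,x,z,y) = pU u * pX u x * pZ x z * pY u z y`. -/

/-- Step 3a of the front-door adjustment: `P(y | z, do(x)) = P(y | do(x), do(z))`. -/
theorem frontdoor_step3a {𝒰 𝒳 𝒵 𝒴 : Type*} [Fintype 𝒰] [Fintype 𝒳] [Fintype 𝒵] [Fintype 𝒴]
    [Nonempty 𝒰] [Nonempty 𝒳] [Nonempty 𝒵] [Nonempty 𝒴]
    (pU : 𝒰 → ℝ) (pX : 𝒰 → 𝒳 → ℝ) (pZ : 𝒳 → 𝒵 → ℝ) (pY : 𝒰 → 𝒵 → 𝒴 → ℝ)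
    (hU0 : ∀ u, 0 ≤ pU u) (hX0 : ∀ u x, 0 ≤ pX u x)
    (hZ0 : ∀ x z, 0 ≤ pZ x z) (hY0 : ∀ u z y, 0 ≤ pY u z y)
    (hU1 : ∑ u, pU u = 1) (hX1 : ∀ u, ∑ x, pX u x = 1)
    (hZ1 : ∀ x, ∑ z, pZ x z = 1) (hY1 : ∀ u z, ∑ y, pY u z y = 1)
    (x : 𝒳) (z : 𝒵) (hzx : 0 < ∑ u, ∑ y, pU u * pZ x z * pY u z y) (y : 𝒴) :
    (∑ u, pU u * pZ x z * pY u z y) / (∑ y', ∑ u, pU u * pZ x z * pY u z y') =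
      ∑ u, pU u * pY u z y := by
  have hz : 0 < pZ x z := by
    rcases (hZ0 x z).lt_or_eq with h | h
    · exact h
    · exfalso
      simp only [← h, mul_zero, zero_mul, Finset.sum_const_zero] at hzx
      exact lt_irrefl 0 hzx
  have hnum : (∑ u, pU u * pZ x z * pY u z y) = pZ x z * ∑ u, pU u * pY u z y := by
    rw [Finset.mul_sum]; congr 1; ext u; ring
  have hden : (∑ y', ∑ u, pU u * pZ x z * pY u z y') = pZ x z := by
    rw [Finset.sum_comm]
    calc (∑ u, ∑ y', pU u * pZ x z * pY u z y')
        = ∑ u, pU u * pZ x z * ∑ y', pY u z y' := by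
          congr 1; ext u; rw [Finset.mul_sum]
      _ = pZ x z := by
          simp only [hY1, mul_one]
          rw [← Finset.sum_mul, hU1, one_mul]
  rw [hnum, hden]
  field_simp
end

section
/- (Front-door adjustment, Step 3b: P(y|do(x), do(z)) = P(y|do(z)).) For every x : 𝒳, z : 𝒵, and y : 𝒴, the doubly interventional probability of Y = y under do(X = x) and do(Z = z) equals the interventional probability under do(Z = z) alone: P(y | do(x), do(z)) = Σ_{x'} P(x', y | do(z)). -/
/- Causal Bayesian network of Figure 1: latent `U`, structure `X ← U → Y`, `X → Z → Y`.
The observational joint is `P(u,x,z,y) = pU u * pX u x * pZ x z * pY u z y`. -/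

/-- Step 3b of the front-door adjustment: `P(y | do(x), do(z)) = P(y | do(z))`. -/
theorem frontdoor_step3b {𝒰 𝒳 𝒵 𝒴 : Type*} [Fintype 𝒰] [Fintype 𝒳] [Fintype 𝒵] [Fintype 𝒴]
    [Nonempty 𝒰] [Nonempty 𝒳] [Nonempty 𝒵] [Nonempty 𝒴]
    (pU : 𝒰 → ℝ) (pX : 𝒰 → 𝒳 → ℝ) (pZ : 𝒳 → 𝒵 → ℝ) (pY : 𝒰 → 𝒵 → 𝒴 → ℝ)
    (hU0 : ∀ u, 0 ≤ pU u) (hX0 : ∀ u x, 0 ≤ pX u x)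
    (hZ0 : ∀ x z, 0 ≤ pZ x z) (hY0 : ∀ u z y, 0 ≤ pY u z y)
    (hU1 : ∑ u, pU u = 1) (hX1 : ∀ u, ∑ x, pX u x = 1)
    (hZ1 : ∀ x, ∑ z, pZ x z = 1) (hY1 : ∀ u z, ∑ y, pY u z y = 1)
    (x : 𝒳) (z : 𝒵) (y : 𝒴) :
    ∑ u, pU u * pY u z y = ∑ x', ∑ u, pU u * pX u x' * pY u z y := by
  rw [Finset.sum_comm]
  refine Finset.sum_congr rfl fun u _ => ?_
  rw [← Finset.sum_mul, ← Finset.mul_sum, hX1 u, mul_one]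
end

section
/- (Front-Door Adjustment Theorem, Theorem 3.3.4 of Pearl, instantiated to the model of Figure 1.) Assume P(x, z) > 0 for every x : 𝒳 and z : 𝒵, where P(x, z) = Σ_{u, y} P(u, x, z, y). Then for every x : 𝒳 and y : 𝒴, the causal effect of X on Y is identifiable and given by the front-door formula: Σ_z P(z, y | do(x)) = Σ_z (P(x, z) / P(x)) · Σ_{x'} (P(x', z, y) / P(x', z)) · P(x'), where P(x', z, y) = Σ_u P(u, x', z, y) and P(x') = Σ_{u, z, y} P(u, x', z, y). -/
/- Causal Bayesian network of Figure 1: latent `U`, structure `X ← U → Y`, `X → Z → Y`.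
The observational joint is `P(u,x,z,y) = pU u * pX u x * pZ x z * pY u z y`. -/

/-- Front-Door Adjustment Theorem (Pearl, Theorem 3.3.4), instantiated to the model of
Figure 1: `P(y | do(x)) = Σ_z P(z | x) Σ_{x'} P(y | x', z) P(x')`. -/
theorem frontdoor_adjustment {𝒰 𝒳 𝒵 𝒴 : Type*} [Fintype 𝒰] [Fintype 𝒳] [Fintype 𝒵] [Fintype 𝒴]
    [Nonempty 𝒰] [Nonempty 𝒳] [Nonempty 𝒵] [Nonempty 𝒴]
    (pU : 𝒰 → ℝ) (pX : 𝒰 → 𝒳 → ℝ) (pZ : 𝒳 → 𝒵 → ℝ) (pY : 𝒰 → 𝒵 → 𝒴 → ℝ)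
    (hU0 : ∀ u, 0 ≤ pU u) (hX0 : ∀ u x, 0 ≤ pX u x)
    (hZ0 : ∀ x z, 0 ≤ pZ x z) (hY0 : ∀ u z y, 0 ≤ pY u z y)
    (hU1 : ∑ u, pU u = 1) (hX1 : ∀ u, ∑ x, pX u x = 1)
    (hZ1 : ∀ x, ∑ z, pZ x z = 1) (hY1 : ∀ u z, ∑ y, pY u z y = 1)
    (hpos : ∀ (x : 𝒳) (z : 𝒵), 0 < ∑ u, ∑ y, pU u * pX u x * pZ x z * pY u z y)
    (x : 𝒳) (y : 𝒴) :
    ∑ z, (∑ u, pU u * pZ x z * pY u z y) =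
      ∑ z, ((∑ u, ∑ y', pU u * pX u x * pZ x z * pY u z y') /
              (∑ u, ∑ z', ∑ y', pU u * pX u x * pZ x z' * pY u z' y')) *
            ∑ x', ((∑ u, pU u * pX u x' * pZ x z * pY u z y) /
                    (∑ u, ∑ y', pU u * pX u x' * pZ x z * pY u z y')) *
                  (∑ u, ∑ z', ∑ y', pU u * pX u x' * pZ x z' * pY u z' y') := by
  classical
  -- abbreviation: a x' = P(x')
  set a : 𝒳 → ℝ := fun x' => ∑ u, pU u * pX u x' with ha
  -- P(x₀-mixed joint with z): ∑_u ∑_y pU pX pZ pY = pZ x₀ z * a x'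
  have key : ∀ (x₀ x' : 𝒳) (z : 𝒵),
      (∑ u, ∑ y', pU u * pX u x' * pZ x₀ z * pY u z y') = pZ x₀ z * a x' := by
    intro x₀ x' z
    have h1 : ∀ u : 𝒰, (∑ y', pU u * pX u x' * pZ x₀ z * pY u z y')
        = pZ x₀ z * (pU u * pX u x') := by
      intro u
      rw [← Finset.mul_sum, hY1]
      ring
    rw [Finset.sum_congr rfl fun u _ => h1 u, ← Finset.mul_sum]
  have key2 : ∀ x' : 𝒳,
      (∑ u, ∑ z', ∑ y', pU u * pX u x' * pZ x z' * pY u z' y') = a x' := by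
    intro x'
    have h1 : ∀ u : 𝒰, (∑ z', ∑ y', pU u * pX u x' * pZ x z' * pY u z' y')
        = pU u * pX u x' := by
      intro u
      have h2 : ∀ z' : 𝒵, (∑ y', pU u * pX u x' * pZ x z' * pY u z' y')
          = pU u * pX u x' * pZ x z' := by
        intro z'
        rw [← Finset.mul_sum, hY1, mul_one]
      rw [Finset.sum_congr rfl fun z' _ => h2 z', ← Finset.mul_sum, hZ1, mul_one]
    exact Finset.sum_congr rfl fun u _ => h1 u
  -- positivity
  have ha0 : ∀ x', 0 ≤ a x' := fun x' =>
    Finset.sum_nonneg fun u _ => mul_nonneg (hU0 u) (hX0 u x')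
  have hapos : ∀ x', 0 < a x' := by
    intro x'
    obtain ⟨z0⟩ := ‹Nonempty 𝒵›
    have h := hpos x' z0
    rw [key x' x' z0] at h
    rcases (ha0 x').lt_or_eq with h' | h'
    · exact h'
    · rw [← h', mul_zero] at h; exact absurd h (lt_irrefl 0)
  have hzpos : ∀ z, 0 < pZ x z := by
    intro z
    have h := hpos x z
    rw [key x x z] at h
    rcases (hZ0 x z).lt_or_eq with h' | h'
    · exact h'
    · rw [← h', zero_mul] at h; exact absurd h (lt_irrefl 0)
  refine Finset.sum_congr rfl fun z _ => ?_
  -- rewrite using key / key2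
  rw [key x x z, key2 x, mul_div_assoc, div_self (hapos x).ne']
  have keyc : ∀ x' : 𝒳,
      (∑ u, pU u * pX u x' * pZ x z * pY u z y)
        = pZ x z * ∑ u, pU u * pX u x' * pY u z y := by
    intro x'
    rw [Finset.mul_sum]
    exact Finset.sum_congr rfl fun u _ => by ring
  have hterm : ∀ x' : 𝒳,
      ((∑ u, pU u * pX u x' * pZ x z * pY u z y) /
        (∑ u, ∑ y', pU u * pX u x' * pZ x z * pY u z y')) *
        (∑ u, ∑ z', ∑ y', pU u * pX u x' * pZ x z' * pY u z' y')
      = ∑ u, pU u * pX u x' * pY u z y := by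
    intro x'
    rw [key x x' z, key2 x', keyc x',
      mul_div_mul_left _ _ (hzpos z).ne',
      div_mul_cancel₀ _ (hapos x').ne']
  rw [Finset.sum_congr rfl fun x' _ => hterm x']
  rw [Finset.sum_comm]
  have hfin : ∀ u : 𝒰, (∑ x', pU u * pX u x' * pY u z y) = pU u * pY u z y := by
    intro u
    have : ∀ x' : 𝒳, pU u * pX u x' * pY u z y = (pU u * pY u z y) * pX u x' :=
      fun x' => by ring
    rw [Finset.sum_congr rfl fun x' _ => this x', ← Finset.mul_sum, hX1, mul_one]
  rw [Finset.sum_congr rfl fun u _ => hfin u, mul_one, Finset.mul_sum]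
  exact Finset.sum_congr rfl fun u _ => by ring
end
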